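/- arXiv:2305.02736 — 11 statements merged into one kernel-verified Lean document; each statement's English description precedes it below -/
import Mathlib

section
/- Let Σ be a finite alphabet and let L₁, L₂ ⊆ Σ* be languages each accepted by some upward-compatible well-structured transition system (WSTS). Then L₁ and L₂ are regularly separable if and only if L₁ ∩ L₂ = ∅. -/
/-- A labeled transition system whose states carry a compatible quasi order
(an upward-compatible LTS, ULTS): the final states are upward closed and the
quasi order is a simulation relation. -/
structure ULTS (A : Type) : Type 1 where
  S : Type
  le : S → S → Prop
  le_refl : ∀ s, le s s
  le_trans : ∀ ⦃s t u⦄, le s t → le t u → le s u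
  init : Set S
  tr : S → A → Set S
  final : Set S
  final_up : ∀ ⦃s t⦄, s ∈ final → le s t → t ∈ final
  sim : ∀ ⦃s t⦄ (a : A) ⦃s'⦄, le s t → s' ∈ tr s a → ∃ t', t' ∈ tr t a ∧ le s' t'

namespace ULTS

variable {A : Type}

/-- One-step successors of a set of states. -/
def stepSet (U : ULTS A) (P : Set U.S) (a : A) : Set U.S := ⋃ s ∈ P, U.tr s a

/-- States reachable from `P` by reading a word. -/
def reachSet (U : ULTS A) (P : Set U.S) : List A → Set U.S
  | [] => P
  | a :: w => U.reachSet (U.stepSet P a) w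

/-- The language of a ULTS: words that can reach a final state from an initial state. -/
def lang (U : ULTS A) : Set (List A) := {w | (U.reachSet U.init w ∩ U.final).Nonempty}

/-- The quasi order of the ULTS is a well quasi order; a ULTS with this property
is a (upward-compatible) WSTS. -/
def IsWQO (U : ULTS A) : Prop := ∀ f : ℕ → U.S, ∃ i j, i < j ∧ U.le (f i) (f j)

/-- A ULTS is deterministic if the set of initial states and every transition image
are singletons. -/
def Deterministic (U : ULTS A) : Prop :=
  (∃ s, U.init = {s}) ∧ ∀ s a, ∃ t, U.tr s a = {t}

end ULTS

/-- A language is regular if it is accepted by a deterministic finite automaton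
with finitely many states. -/
def IsRegularLang {A : Type} (L : Set (List A)) : Prop :=
  ∃ (Q : Type) (_ : Fintype Q) (M : DFA A Q), M.accepts = L

/-- Two languages are regularly separable if some regular language contains the
first and is disjoint from the second. -/
def RegSep {A : Type} (L1 L2 : Set (List A)) : Prop :=
  ∃ R : Set (List A), IsRegularLang R ∧ L1 ⊆ R ∧ R ∩ L2 = ∅

/-!
Determinize the disjoint union of the two systems by tracking the downward closure of the set of
reachable states. Lower sets of a well quasi order form a Noetherian space for the Hoare
topology (Higman's lemma), the determinized transitions are continuous, and "contains a final
state of `Uᵢ`" is open. The closure of the set of reachable points has finitely many irreducible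
components, and every transition maps a component into a component: this is a finite automaton.
Accept when the current component meets the acceptance region of `U₁`. A component meeting both
acceptance regions meets their intersection by irreducibility, hence so does the set of reachable
points, which is excluded by `L₁ ∩ L₂ = ∅`.
-/

open Set Topology TopologicalSpace

theorem RegSep.inter_eq_empty {A : Type} {L₁ L₂ : Set (List A)} (h : RegSep L₁ L₂) :
    L₁ ∩ L₂ = ∅ := by
  obtain ⟨R, -, hR₁, hR₂⟩ := h
  exact eq_empty_of_subset_empty (hR₂ ▸ inter_subset_inter_left L₂ hR₁)

instance Sum.wellQuasiOrderedLE {α β : Type*} [Preorder α] [Preorder β] [WellQuasiOrderedLE α]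
    [WellQuasiOrderedLE β] : WellQuasiOrderedLE (α ⊕ β) := by
  rw [← isPWO_univ_iff, ← range_inl_union_range_inr, ← image_univ, ← image_univ]
  exact ((isPWO_univ_iff.2 ‹_›).image_of_monotone Sum.inl_mono).union
    ((isPWO_univ_iff.2 ‹_›).image_of_monotone Sum.inr_mono)

theorem IsUpperSet.image_inl {α β : Type*} [Preorder α] [Preorder β] {s : Set α}
    (hs : IsUpperSet s) : IsUpperSet (Sum.inl '' s : Set (α ⊕ β)) := by
  rintro _ (b | b) hab ⟨a, ha, rfl⟩
  · exact ⟨b, hs (Sum.inl_le_inl_iff.1 hab) ha, rfl⟩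
  · exact (Sum.not_inl_le_inr hab).elim

theorem IsUpperSet.image_inr {α β : Type*} [Preorder α] [Preorder β] {s : Set β}
    (hs : IsUpperSet s) : IsUpperSet (Sum.inr '' s : Set (α ⊕ β)) := by
  rintro _ (b | b) hab ⟨a, ha, rfl⟩
  · exact (Sum.not_inr_le_inl hab).elim
  · exact ⟨b, hs (Sum.inr_le_inr_iff.1 hab) ha, rfl⟩

theorem Set.inter_image_inl_nonempty_iff {α β : Type*} (s u : Set α) (t : Set β) :
    ((Sum.inl '' s ∪ Sum.inr '' t) ∩ Sum.inl '' u).Nonempty ↔ (s ∩ u).Nonempty := by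
  simp [Set.Nonempty]

theorem Set.inter_image_inr_nonempty_iff {α β : Type*} (s : Set α) (t u : Set β) :
    ((Sum.inl '' s ∪ Sum.inr '' t) ∩ Sum.inr '' u).Nonempty ↔ (t ∩ u).Nonempty := by
  simp [Set.Nonempty]

theorem IsIrreducible.exists_subset_of_subset_sUnion {X : Type*} [TopologicalSpace X]
    {s : Set X} {S : Set (Set X)} (hs : IsIrreducible s) (hSf : S.Finite)
    (hSc : ∀ t ∈ S, IsClosed t) (h : s ⊆ ⋃₀ S) : ∃ t ∈ S, s ⊆ t := by
  lift S to Finset (Set X) using hSf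
  exact isIrreducible_iff_sUnion_isClosed.1 hs S hSc h

namespace DFA

variable {A X : Type} [TopologicalSpace X] (M : DFA A X)

theorem mapsTo_closure_range_eval (hM : ∀ a, Continuous (M.step · a)) (a : A) :
    MapsTo (M.step · a) (closure (range M.eval)) (closure (range M.eval)) := by
  refine MapsTo.closure ?_ (hM a)
  rintro _ ⟨w, rfl⟩
  exact ⟨w ++ [a], M.eval_append_singleton w a⟩

theorem exists_finite_irreducible_cover [NoetherianSpace X] (hM : ∀ a, Continuous (M.step · a)) :
    ∃ (Q : Type) (_ : Fintype Q) (N : DFA A Q) (cell : Q → Set X),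
      (∀ q, IsIrreducible (cell q) ∧ cell q ⊆ closure (range M.eval)) ∧
        ∀ w, M.eval w ∈ cell (N.eval w) := by
  obtain ⟨S, hSf, hSc, hSi, hS⟩ :=
    NoetherianSpace.exists_finite_set_isClosed_irreducible (isClosed_closure (s := range M.eval))
  have hcover {s} (hs : IsIrreducible s) (hsub : s ⊆ closure (range M.eval)) : ∃ t ∈ S, s ⊆ t :=
    hs.exists_subset_of_subset_sUnion hSf hSc (hS ▸ hsub)
  have hcell (C : S) : (C : Set X) ⊆ closure (range M.eval) := hS ▸ subset_sUnion_of_mem C.2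
  have hstep (C : S) (a : A) : ∃ C' : S, MapsTo (M.step · a) C C' := by
    obtain ⟨C', hC', h⟩ := hcover ((hSi C C.2).image _ (hM a).continuousOn)
      (image_subset_iff.2 ((hcell C).trans (M.mapsTo_closure_range_eval hM a)))
    exact ⟨⟨C', hC'⟩, image_subset_iff.1 h⟩
  choose next hnext using hstep
  obtain ⟨C₀, hC₀, hstart⟩ := hcover isIrreducible_singleton
    (singleton_subset_iff.2 (subset_closure ⟨[], rfl⟩))
  refine ⟨S, hSf.fintype, ⟨next, ⟨C₀, hC₀⟩, ∅⟩, (↑), fun C => ⟨hSi C C.2, hcell C⟩, ?_⟩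
  intro w
  induction w using List.reverseRecOn with
  | nil => exact singleton_subset_iff.1 hstart
  | append_singleton w a ih =>
    rw [eval_append_singleton, eval_append_singleton]
    exact hnext _ a ih

theorem regSep_of_noetherianSpace [NoetherianSpace X] (hM : ∀ a, Continuous (M.step · a))
    {O₁ O₂ : Set X} (hO₁ : IsOpen O₁) (hO₂ : IsOpen O₂) (hdisj : ∀ w, M.eval w ∉ O₁ ∩ O₂) :
    RegSep {w | M.eval w ∈ O₁} {w | M.eval w ∈ O₂} := by
  obtain ⟨Q, _, N, cell, hcell, heval⟩ := M.exists_finite_irreducible_cover hM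
  refine ⟨{w | (cell (N.eval w) ∩ O₁).Nonempty},
    ⟨Q, inferInstance, { N with accept := {q | (cell q ∩ O₁).Nonempty} }, rfl⟩,
    fun w hw => ⟨_, heval w, hw⟩, eq_empty_iff_forall_notMem.2 ?_⟩
  rintro w ⟨hw₁, hw₂⟩
  have hmeet : (cell (N.eval w) ∩ (O₁ ∩ O₂)).Nonempty :=
    (hcell _).1.isPreirreducible O₁ O₂ hO₁ hO₂ hw₁ ⟨_, heval w, hw₂⟩
  obtain ⟨_, ⟨v, rfl⟩, hv⟩ := (closure_inter_open_nonempty_iff (hO₁.inter hO₂)).1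
    (hmeet.mono (inter_subset_inter_left _ (hcell _).2))
  exact hdisj v hv

end DFA

/-- `LowerSet α` with the Hoare (lower Vietoris) topology. -/
def Hoare (α : Type*) [Preorder α] : Type _ := LowerSet α

namespace Hoare

variable {α : Type*} [Preorder α]

instance : SetLike (Hoare α) α := inferInstanceAs (SetLike (LowerSet α) α)

def down (P : Set α) : Hoare α := lowerClosure P

theorem mem_down {P : Set α} {a : α} : a ∈ down P ↔ ∃ b ∈ P, a ≤ b := mem_lowerClosure

theorem subset_down (P : Set α) : P ⊆ down P := subset_lowerClosure

def basicOpen (l : List α) : Set (Hoare α) := {D | ∀ a ∈ l, a ∈ D}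

instance : TopologicalSpace (Hoare α) := generateFrom (range basicOpen)

theorem basicOpen_append (l₁ l₂ : List α) :
    basicOpen (l₁ ++ l₂) = basicOpen l₁ ∩ basicOpen l₂ := by
  ext D
  simp only [basicOpen, List.mem_append, or_imp, forall_and, mem_ofPred_eq, mem_inter_iff]

theorem basicOpen_anti {l₁ l₂ : List α} (h : List.SublistForall₂ (· ≤ ·) l₁ l₂) :
    basicOpen l₂ ⊆ basicOpen l₁ := by
  induction h with
  | nil => exact fun _ _ _ ha => absurd ha List.not_mem_nil
  | cons hab _ ih =>
    rintro D hD a (_ | ⟨_, ha⟩)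
    · exact LowerSet.lower D hab (hD _ List.mem_cons_self)
    · exact ih (fun c hc => hD c (List.mem_cons_of_mem _ hc)) a ha
  | cons_right _ ih => exact fun D hD => ih fun c hc => hD c (List.mem_cons_of_mem _ hc)

theorem isTopologicalBasis_basicOpen : IsTopologicalBasis (range (basicOpen (α := α))) where
  exists_subset_inter := by
    rintro _ ⟨l₁, rfl⟩ _ ⟨l₂, rfl⟩ D hD
    exact ⟨_, ⟨l₁ ++ l₂, rfl⟩, by rwa [basicOpen_append], (basicOpen_append l₁ l₂).subset⟩
  sUnion_eq := sUnion_eq_univ_iff.2 fun D => ⟨_, ⟨[], rfl⟩, fun _ ha => absurd ha List.not_mem_nil⟩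
  eq_generateFrom := rfl

theorem exists_basicOpen_subset {U : Set (Hoare α)} (hU : IsOpen U) {D : Hoare α} (hD : D ∈ U) :
    ∃ l, D ∈ basicOpen l ∧ basicOpen l ⊆ U := by
  obtain ⟨_, ⟨l, rfl⟩, h⟩ := isTopologicalBasis_basicOpen.exists_subset_of_mem_open hD hU
  exact ⟨l, h⟩

instance [WellQuasiOrderedLE α] : NoetherianSpace (Hoare α) := by
  refine ⟨RelEmbedding.wellFounded_iff_isEmpty.2 ⟨fun O => ?_⟩⟩
  have hO : StrictMono O := fun _ _ h => O.map_rel_iff.2 h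
  choose D hD hDn using fun n => SetLike.exists_of_lt (hO (Nat.lt_succ_self n))
  choose l hDl hl using fun n => exists_basicOpen_subset (O (n + 1)).isOpen (hD n)
  have higman : WellQuasiOrdered (List.SublistForall₂ (α := α) (· ≤ ·)) := by
    rw [← partiallyWellOrderedOn_univ_iff]
    simpa using (partiallyWellOrderedOn_univ_iff.2 (wellQuasiOrdered_le (α := α))
      ).partiallyWellOrderedOn_sublistForall₂
  obtain ⟨i, j, hij, hle⟩ := higman l
  exact hDn j (hO.monotone hij (hl i (basicOpen_anti hle (hDl j))))

def meets (P : Set α) : Set (Hoare α) := {D | ∃ a ∈ D, a ∈ P}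

theorem isOpen_meets (P : Set α) : IsOpen (meets P) := by
  have : meets P = ⋃ a ∈ P, basicOpen [a] := by
    ext D; simp [meets, basicOpen, and_comm]
  rw [this]
  exact isOpen_biUnion fun a _ => isTopologicalBasis_basicOpen.isOpen ⟨[a], rfl⟩

theorem down_mem_meets_iff {P Q : Set α} (hQ : IsUpperSet Q) :
    down P ∈ meets Q ↔ (P ∩ Q).Nonempty := by
  simp only [meets, mem_ofPred_eq, mem_down]
  constructor
  · rintro ⟨a, ⟨b, hb, hab⟩, ha⟩
    exact ⟨b, hb, hQ hab ha⟩
  · rintro ⟨b, hb, hbQ⟩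
    exact ⟨b, ⟨b, hb, le_rfl⟩, hbQ⟩

def image (r : α → Set α) (D : Hoare α) : Hoare α := down (⋃ a ∈ D, r a)

theorem continuous_image (r : α → Set α) : Continuous (image r) := by
  refine continuous_generateFrom_iff.2 ?_
  rintro _ ⟨l, rfl⟩
  have : image r ⁻¹' basicOpen l = ⋂ b ∈ {b | b ∈ l}, meets {a | ∃ c ∈ r a, b ≤ c} := by
    ext D
    simp only [mem_preimage, mem_iInter]
    exact forall₂_congr fun b _ => mem_down.trans <| by
      simp only [meets, mem_ofPred_eq, mem_iUnion₂, exists_prop]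
      exact ⟨fun ⟨c, ⟨a, ha, hc⟩, hbc⟩ => ⟨a, ha, c, hc, hbc⟩,
        fun ⟨a, ha, c, hc, hbc⟩ => ⟨c, ⟨a, ha, hc⟩, hbc⟩⟩
  rw [this]
  exact l.finite_toSet.isOpen_biInter fun b _ => isOpen_meets _

end Hoare

namespace ULTS

variable {A : Type}

instance (U : ULTS A) : Preorder U.S where
  le := U.le
  le_refl := U.le_refl
  le_trans _ _ _ h h' := U.le_trans h h'

theorem IsWQO.wellQuasiOrderedLE {U : ULTS A} (h : U.IsWQO) : WellQuasiOrderedLE U.S := ⟨h⟩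

theorem isUpperSet_final (U : ULTS A) : IsUpperSet U.final := fun _ _ h hs => U.final_up hs h

def hoareDFA (U : ULTS A) : DFA A (Hoare U.S) where
  step D a := Hoare.image (U.tr · a) D
  start := Hoare.down U.init
  accept := Hoare.meets U.final

theorem continuous_hoareDFA_step (U : ULTS A) (a : A) : Continuous (U.hoareDFA.step · a) :=
  Hoare.continuous_image _

theorem down_stepSet_down (U : ULTS A) (P : Set U.S) (a : A) :
    Hoare.down (U.stepSet (Hoare.down P) a) = Hoare.down (U.stepSet P a) := by
  refine SetLike.ext fun s => ?_
  simp only [Hoare.mem_down, stepSet, mem_iUnion₂, exists_prop]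
  constructor
  · rintro ⟨t, ⟨p, ⟨q, hq, hpq⟩, ht⟩, hst⟩
    obtain ⟨t', ht', htt'⟩ := U.sim a hpq ht
    exact ⟨t', ⟨q, hq, ht'⟩, U.le_trans hst htt'⟩
  · rintro ⟨t, ⟨p, hp, ht⟩, hst⟩
    exact ⟨t, ⟨p, Hoare.subset_down P hp, ht⟩, hst⟩

theorem hoareDFA_evalFrom (U : ULTS A) (P : Set U.S) (w : List A) :
    U.hoareDFA.evalFrom (Hoare.down P) w = Hoare.down (U.reachSet P w) := by
  induction w generalizing P with
  | nil => rfl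
  | cons a w ih =>
    rw [DFA.evalFrom_cons, reachSet, ← ih]
    exact congrArg (U.hoareDFA.evalFrom · w) (U.down_stepSet_down P a)

theorem hoareDFA_eval (U : ULTS A) (w : List A) :
    U.hoareDFA.eval w = Hoare.down (U.reachSet U.init w) :=
  U.hoareDFA_evalFrom U.init w

theorem hoareDFA_eval_mem_meets_iff (U : ULTS A) {P : Set U.S} (hP : IsUpperSet P)
    (w : List A) : U.hoareDFA.eval w ∈ Hoare.meets P ↔ (U.reachSet U.init w ∩ P).Nonempty := by
  rw [hoareDFA_eval, Hoare.down_mem_meets_iff hP]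

def sum (U₁ U₂ : ULTS A) : ULTS A where
  S := U₁.S ⊕ U₂.S
  le := (· ≤ ·)
  le_refl := _root_.le_refl
  le_trans _ _ _ := _root_.le_trans
  init := Sum.inl '' U₁.init ∪ Sum.inr '' U₂.init
  tr := Sum.elim (fun s a => Sum.inl '' U₁.tr s a) (fun s a => Sum.inr '' U₂.tr s a)
  final := Sum.inl '' U₁.final ∪ Sum.inr '' U₂.final
  final_up _ _ hs hst := (U₁.isUpperSet_final.image_inl.union U₂.isUpperSet_final.image_inr) hst hs
  sim := by
    rintro (s | s) (t | t) a s' hst hs'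
    · obtain ⟨s', hs', rfl⟩ := hs'
      obtain ⟨t', ht', h'⟩ := U₁.sim a (Sum.inl_le_inl_iff.1 hst) hs'
      exact ⟨.inl t', mem_image_of_mem _ ht', Sum.inl_le_inl_iff.2 h'⟩
    · exact (Sum.not_inl_le_inr hst).elim
    · exact (Sum.not_inr_le_inl hst).elim
    · obtain ⟨s', hs', rfl⟩ := hs'
      obtain ⟨t', ht', h'⟩ := U₂.sim a (Sum.inr_le_inr_iff.1 hst) hs'
      exact ⟨.inr t', mem_image_of_mem _ ht', Sum.inr_le_inr_iff.2 h'⟩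

theorem IsWQO.sum {U₁ U₂ : ULTS A} (h₁ : U₁.IsWQO) (h₂ : U₂.IsWQO) : (U₁.sum U₂).IsWQO :=
  have := h₁.wellQuasiOrderedLE
  have := h₂.wellQuasiOrderedLE
  wellQuasiOrdered_le (α := U₁.S ⊕ U₂.S)

variable (U₁ U₂ : ULTS A)

theorem stepSet_sum (P : Set U₁.S) (Q : Set U₂.S) (a : A) :
    (U₁.sum U₂).stepSet (Sum.inl '' P ∪ Sum.inr '' Q) a =
      Sum.inl '' U₁.stepSet P a ∪ Sum.inr '' U₂.stepSet Q a := by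
  unfold stepSet sum
  simp only [biUnion_union, biUnion_image, image_iUnion₂, Sum.elim_inl, Sum.elim_inr]

theorem reachSet_sum (P : Set U₁.S) (Q : Set U₂.S) (w : List A) :
    (U₁.sum U₂).reachSet (Sum.inl '' P ∪ Sum.inr '' Q) w =
      Sum.inl '' U₁.reachSet P w ∪ Sum.inr '' U₂.reachSet Q w := by
  induction w generalizing P Q with
  | nil => rfl
  | cons a w ih =>
    exact (congrArg ((U₁.sum U₂).reachSet · w) (stepSet_sum U₁ U₂ P Q a)).trans (ih _ _)

theorem reachSet_sum_init (w : List A) :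
    (U₁.sum U₂).reachSet (U₁.sum U₂).init w =
      Sum.inl '' U₁.reachSet U₁.init w ∪ Sum.inr '' U₂.reachSet U₂.init w :=
  reachSet_sum U₁ U₂ U₁.init U₂.init w

/- `α := (U₁.sum U₂).S` selects the order of the ULTS: Mathlib's order on `U₁.S ⊕ U₂.S` has the
same `≤` but a different `<`, so the two `Preorder` instances are not interchangeable. -/
theorem sum_hoareDFA_eval_mem_meets_inl_iff (w : List A) :
    (U₁.sum U₂).hoareDFA.eval w ∈ Hoare.meets (α := (U₁.sum U₂).S) (Sum.inl '' U₁.final) ↔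
      w ∈ U₁.lang := by
  rw [hoareDFA_eval_mem_meets_iff _ U₁.isUpperSet_final.image_inl, reachSet_sum_init]
  exact inter_image_inl_nonempty_iff _ _ _

theorem sum_hoareDFA_eval_mem_meets_inr_iff (w : List A) :
    (U₁.sum U₂).hoareDFA.eval w ∈ Hoare.meets (α := (U₁.sum U₂).S) (Sum.inr '' U₂.final) ↔
      w ∈ U₂.lang := by
  rw [hoareDFA_eval_mem_meets_iff _ U₂.isUpperSet_final.image_inr, reachSet_sum_init]
  exact inter_image_inr_nonempty_iff _ _ _

variable {U₁ U₂}

theorem regSep_lang_of_isWQO (h₁ : U₁.IsWQO) (h₂ : U₂.IsWQO) (h : U₁.lang ∩ U₂.lang = ∅) :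
    RegSep U₁.lang U₂.lang := by
  have := (h₁.sum h₂).wellQuasiOrderedLE
  have hsep := (U₁.sum U₂).hoareDFA.regSep_of_noetherianSpace (continuous_hoareDFA_step _)
    (Hoare.isOpen_meets _) (Hoare.isOpen_meets _) fun w hw =>
      h.subset ⟨(sum_hoareDFA_eval_mem_meets_inl_iff U₁ U₂ w).1 hw.1,
        (sum_hoareDFA_eval_mem_meets_inr_iff U₁ U₂ w).1 hw.2⟩
  simpa only [sum_hoareDFA_eval_mem_meets_inl_iff, sum_hoareDFA_eval_mem_meets_inr_iff,
    ofPred_mem_eq] using hsep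

end ULTS

theorem wsts_regular_separability_general {A : Type} (L1 L2 : Set (List A))
    (h1 : ∃ U : ULTS A, U.IsWQO ∧ U.lang = L1)
    (h2 : ∃ U : ULTS A, U.IsWQO ∧ U.lang = L2) :
    RegSep L1 L2 ↔ L1 ∩ L2 = ∅ := by
  obtain ⟨U₁, hU₁, rfl⟩ := h1
  obtain ⟨U₂, hU₂, rfl⟩ := h2
  exact ⟨RegSep.inter_eq_empty, ULTS.regSep_lang_of_isWQO hU₁ hU₂⟩

/-- For languages `L₁, L₂` over a finite alphabet, each accepted by
some upward-compatible WSTS, regular separability holds iff `L₁ ∩ L₂ = ∅`. -/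
theorem wsts_regular_separability {A : Type} [Finite A] (L1 L2 : Set (List A))
    (h1 : ∃ U : ULTS A, U.IsWQO ∧ U.lang = L1)
    (h2 : ∃ U : ULTS A, U.IsWQO ∧ U.lang = L2) :
    RegSep L1 L2 ↔ L1 ∩ L2 = ∅ :=
  wsts_regular_separability_general L1 L2 h1 h2
end

section
/- Let U and U' be ULTSes over the same finite alphabet Σ, at least one of which is deterministic. If the synchronized product U × U' admits a finitely-represented inductive invariant, then L(U) and L(U') are regularly separable. -/
namespace ULTS

variable {A : Type}

/-- Downward closure of a set of states. -/
def dcl (U : ULTS A) (Q : Set U.S) : Set U.S := {s | ∃ q ∈ Q, U.le s q}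

/-- A set of states is downward closed. -/
def DownClosed (U : ULTS A) (X : Set U.S) : Prop :=
  ∀ ⦃s t⦄, U.le s t → t ∈ X → s ∈ X

/-- An inductive invariant: a downward-closed set of states containing the initial
states, disjoint from the final states, and closed under the transition relation. -/
def InductiveInvariant (U : ULTS A) (X : Set U.S) : Prop :=
  U.DownClosed X ∧ U.init ⊆ X ∧ U.final ∩ X = ∅ ∧ ∀ a, U.stepSet X a ⊆ X

/-- An inductive invariant is finitely represented if it is the downward closure of
a finite set of states. -/
def FinRepInvariant (U : ULTS A) : Prop :=
  ∃ Q : Set U.S, Q.Finite ∧ U.InductiveInvariant (U.dcl Q)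

/-- Synchronized product of two ULTS: states are pairs with the product order,
transitions synchronize on the common letter. -/
def prod (U V : ULTS A) : ULTS A where
  S := U.S × V.S
  le p q := U.le p.1 q.1 ∧ V.le p.2 q.2
  le_refl p := ⟨U.le_refl _, V.le_refl _⟩
  le_trans _ _ _ h1 h2 := ⟨U.le_trans h1.1 h2.1, V.le_trans h1.2 h2.2⟩
  init := U.init ×ˢ V.init
  tr p a := U.tr p.1 a ×ˢ V.tr p.2 a
  final := U.final ×ˢ V.final
  final_up := by
    rintro ⟨s1, s2⟩ ⟨t1, t2⟩ ⟨hf1, hf2⟩ ⟨h1, h2⟩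
    exact ⟨U.final_up hf1 h1, V.final_up hf2 h2⟩
  sim := by
    rintro ⟨s1, s2⟩ ⟨t1, t2⟩ a ⟨s1', s2'⟩ ⟨h1, h2⟩ ⟨hm1, hm2⟩
    obtain ⟨t1', ht1, hle1⟩ := U.sim a h1 hm1
    obtain ⟨t2', ht2, hle2⟩ := V.sim a h2 hm2
    exact ⟨(t1', t2'), ⟨ht1, ht2⟩, hle1, hle2⟩

end ULTS

/-!
Say `V` is deterministic (otherwise swap the factors and complement the separator), and let
`↓Q` be the invariant of `U × V`. Read `Q` as an NFA: `q →a q'` iff some `a`-successor of `q`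
lies below `q'`, accepting when the `U`-component of `q` is final. Because `≤` is a simulation
and `↓Q` is inductive, every state of `U × V` reachable on `w` lies below a state of `Q` reached
on `w`, so the NFA accepts `L(U)`. Because `V` is deterministic, the `V`-state after `w` lies
below the `V`-component of every state of `Q` reached on `w`; so a word of `L(V)` accepted by
the NFA would put a final state of `U × V` into `↓Q`.
-/

theorem NFA.isRegular_accepts {α σ : Type} [Finite σ] (M : NFA α σ) : M.accepts.IsRegular :=
  ⟨Set σ, Fintype.ofFinite _, M.toDFA, M.toDFA_correct⟩

theorem RegSep.symm {A : Type} {L₁ L₂ : Set (List A)} (h : RegSep L₁ L₂) : RegSep L₂ L₁ := by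
  obtain ⟨R, hR, hsub, hdisj⟩ := h
  refine ⟨Rᶜ, Language.IsRegular.compl hR, fun w hw hwR => ?_, ?_⟩
  · exact Set.eq_empty_iff_forall_notMem.mp hdisj w ⟨hwR, hw⟩
  · exact Set.eq_empty_iff_forall_notMem.mpr fun w hw => hw.1 (hsub hw.2)

namespace ULTS

variable {A : Type}

theorem stepSet_prod (U V : ULTS A) (P : Set U.S) (P' : Set V.S) (a : A) :
    (U.prod V).stepSet (P ×ˢ P') a = U.stepSet P a ×ˢ V.stepSet P' a :=
  Set.biUnion_prod P P' (U.tr · a) (V.tr · a)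

theorem reachSet_prod (U V : ULTS A) (w : List A) :
    ∀ (P : Set U.S) (P' : Set V.S),
      (U.prod V).reachSet (P ×ˢ P') w = U.reachSet P w ×ˢ V.reachSet P' w := by
  induction w with
  | nil => intro P P'; rfl
  | cons a w ih =>
    intro P P'
    exact (congrArg ((U.prod V).reachSet · w) (stepSet_prod U V P P' a)).trans (ih _ _)

section Deterministic

variable {V : ULTS A} {f : V.S → A → V.S}

theorem reachSet_singleton_of_tr_eq (hf : ∀ s a, V.tr s a = {f s a}) (w : List A) :
    ∀ s, V.reachSet {s} w = {w.foldl f s} := by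
  induction w with
  | nil => intro s; rfl
  | cons a w ih =>
    intro s
    simp only [reachSet, stepSet, Set.mem_singleton_iff, Set.iUnion_iUnion_eq_left, hf, ih,
      List.foldl_cons]

theorem le_of_le_of_tr_eq (hf : ∀ s a, V.tr s a = {f s a}) {s t : V.S} (h : V.le s t) (a : A) :
    V.le (f s a) (f t a) := by
  obtain ⟨t', ht', hle⟩ := V.sim a h (hf s a ▸ Set.mem_singleton _)
  rw [hf, Set.mem_singleton_iff] at ht'
  exact ht' ▸ hle

end Deterministic

def abstractNFA (U : ULTS A) (Q : Set U.S) (F : Set U.S) : NFA A Q where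
  step q a := {q' | ∃ p ∈ U.tr q a, U.le p q'}
  start := {q | ∃ i ∈ U.init, U.le i q}
  accept := {q | (q : U.S) ∈ F}

section Abstraction

variable (W : ULTS A) {Q : Set W.S} (F : Set W.S)

theorem exists_le_mem_evalFrom (hstep : ∀ a, W.stepSet (W.dcl Q) a ⊆ W.dcl Q) (w : List A) :
    ∀ (P : Set W.S) (S : Set Q), (∀ s ∈ P, ∃ q ∈ S, W.le s q) →
      ∀ s ∈ W.reachSet P w, ∃ q ∈ (W.abstractNFA Q F).evalFrom S w, W.le s q := by
  induction w with
  | nil => intro P S hPS; exact hPS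
  | cons a w ih =>
    refine fun P S hPS => ih _ _ fun s' hs' => ?_
    obtain ⟨s, hs, hss'⟩ := Set.mem_iUnion₂.mp hs'
    obtain ⟨q, hqS, hsq⟩ := hPS s hs
    obtain ⟨p, hp, hs'p⟩ := W.sim a hsq hss'
    obtain ⟨q', hq', hpq'⟩ : p ∈ W.dcl Q :=
      hstep a (Set.mem_iUnion₂.mpr ⟨q, ⟨q, q.2, W.le_refl _⟩, hp⟩)
    exact ⟨⟨q', hq'⟩, NFA.mem_stepSet.mpr ⟨q, hqS, p, hp, hpq'⟩, W.le_trans hs'p hpq'⟩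

theorem exists_le_mem_eval (hinv : W.InductiveInvariant (W.dcl Q)) {w : List A} {s : W.S}
    (hs : s ∈ W.reachSet W.init w) : ∃ q ∈ (W.abstractNFA Q F).eval w, W.le s q := by
  refine W.exists_le_mem_evalFrom F hinv.2.2.2 w _ _ (fun i hi => ?_) s hs
  obtain ⟨q, hq, hiq⟩ := hinv.2.1 hi
  exact ⟨⟨q, hq⟩, ⟨i, hi, hiq⟩, hiq⟩

end Abstraction

theorem le_snd_of_mem_evalFrom {U V : ULTS A} {Q : Set (U.prod V).S} (F : Set (U.prod V).S)
    {f : V.S → A → V.S} (hf : ∀ s a, V.tr s a = {f s a}) (w : List A) :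
    ∀ (S : Set Q) (v : V.S), (∀ q ∈ S, V.le v q.1.2) →
      ∀ q ∈ ((U.prod V).abstractNFA Q F).evalFrom S w, V.le (w.foldl f v) q.1.2 := by
  induction w with
  | nil => intro S v hS; exact hS
  | cons a w ih =>
    refine fun S v hS => ih _ _ fun q' hq' => ?_
    obtain ⟨q, hqS, p, hp, hpq'⟩ := NFA.mem_stepSet.mp hq'
    have hp2 : p.2 = f q.1.2 a := Set.mem_singleton_iff.mp (hf _ _ ▸ hp.2)
    exact V.le_trans (hp2 ▸ le_of_le_of_tr_eq hf (hS q hqS) a) hpq'.2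

theorem le_snd_of_mem_eval {U V : ULTS A} {Q : Set (U.prod V).S} (F : Set (U.prod V).S)
    {v₀ : V.S} (hv₀ : V.init = {v₀}) {f : V.S → A → V.S} (hf : ∀ s a, V.tr s a = {f s a})
    {w : List A} {q : Q} (hq : q ∈ ((U.prod V).abstractNFA Q F).eval w) :
    V.le (w.foldl f v₀) q.1.2 := by
  refine le_snd_of_mem_evalFrom F hf w _ v₀ (fun r hr => ?_) q hq
  obtain ⟨i, hi, hir⟩ := hr
  obtain rfl : i.2 = v₀ := Set.mem_singleton_iff.mp (hv₀ ▸ hi.2)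
  exact hir.2

theorem InductiveInvariant.swap {U V : ULTS A} {X : Set (U.prod V).S}
    (h : (U.prod V).InductiveInvariant X) : (V.prod U).InductiveInvariant (Prod.swap ⁻¹' X) := by
  obtain ⟨hdown, hinit, hfinal, hstep⟩ := h
  refine ⟨fun s t hst ht => hdown (s := s.swap) (t := t.swap) ⟨hst.2, hst.1⟩ ht,
    fun p hp => hinit ⟨hp.2, hp.1⟩, Set.eq_empty_iff_forall_notMem.mpr fun p hp => ?_,
    fun a p hp => ?_⟩
  · exact Set.eq_empty_iff_forall_notMem.mp hfinal p.swap ⟨⟨hp.1.2, hp.1.1⟩, hp.2⟩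
  · obtain ⟨s, hs, hsp⟩ := Set.mem_iUnion₂.mp hp
    exact hstep a (Set.mem_iUnion₂.mpr ⟨s.swap, hs, hsp.2, hsp.1⟩)

theorem FinRepInvariant.swap {U V : ULTS A} (h : (U.prod V).FinRepInvariant) :
    (V.prod U).FinRepInvariant := by
  obtain ⟨Q, hQ, hinv⟩ := h
  have hdcl : (V.prod U).dcl (Prod.swap '' Q) = Prod.swap ⁻¹' (U.prod V).dcl Q := by
    ext p
    constructor
    · rintro ⟨_, ⟨q, hq, rfl⟩, hle⟩
      exact ⟨q, hq, hle.2, hle.1⟩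
    · rintro ⟨q, hq, hle⟩
      exact ⟨q.swap, ⟨q, hq, rfl⟩, hle.2, hle.1⟩
  exact ⟨Prod.swap '' Q, hQ.image _, hdcl ▸ hinv.swap⟩

theorem regSep_lang_of_deterministic_right {U V : ULTS A} (hdet : V.Deterministic)
    (hfin : (U.prod V).FinRepInvariant) : RegSep U.lang V.lang := by
  obtain ⟨⟨v₀, hv₀⟩, htr⟩ := hdet
  choose f hf using htr
  obtain ⟨Q, hQ, hinv⟩ := hfin
  have : Finite Q := hQ.to_subtype
  let N := (U.prod V).abstractNFA Q (Prod.fst ⁻¹' U.final)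
  have hrun (w : List A) : V.reachSet V.init w = {w.foldl f v₀} :=
    hv₀ ▸ reachSet_singleton_of_tr_eq hf w v₀
  refine ⟨N.accepts, N.isRegular_accepts, ?_, ?_⟩
  · rintro w ⟨u, hu, huF⟩
    have hreach : (u, w.foldl f v₀) ∈ (U.prod V).reachSet (U.init ×ˢ V.init) w :=
      reachSet_prod U V w _ _ ▸ ⟨hu, hrun w ▸ rfl⟩
    obtain ⟨q, hq, hle⟩ := (U.prod V).exists_le_mem_eval _ hinv hreach
    exact ⟨q, U.final_up huF hle.1, hq⟩
  · refine Set.eq_empty_iff_forall_notMem.mpr fun w ⟨⟨q, hqF, hq⟩, v, hv, hvF⟩ => ?_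
    obtain rfl : v = w.foldl f v₀ := Set.mem_singleton_iff.mp (hrun w ▸ hv)
    have hqV : q.1.2 ∈ V.final := V.final_up hvF (le_snd_of_mem_eval _ hv₀ hf hq)
    exact Set.eq_empty_iff_forall_notMem.mp hinv.2.2.1 q ⟨⟨hqF, hqV⟩, q, q.2, (U.prod V).le_refl _⟩

end ULTS

theorem finRepInvariant_regSep_general {A : Type} (U V : ULTS A)
    (hdet : U.Deterministic ∨ V.Deterministic)
    (hinv : (U.prod V).FinRepInvariant) :
    RegSep U.lang V.lang :=
  hdet.elim (fun hU => (ULTS.regSep_lang_of_deterministic_right hU hinv.swap).symm)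
    (fun hV => ULTS.regSep_lang_of_deterministic_right hV hinv)

/-- If one of two ULTS is deterministic and their synchronized
product admits a finitely-represented inductive invariant, then their languages
are regularly separable. -/
theorem finRepInvariant_regSep {A : Type} [Finite A] (U V : ULTS A)
    (hdet : U.Deterministic ∨ V.Deterministic)
    (hinv : (U.prod V).FinRepInvariant) :
    RegSep U.lang V.lang :=
  finRepInvariant_regSep_general U V hdet hinv
end

section
/- Let U = (S, ≤, I, δ, F) be a ULTS over a finite alphabet Σ. Define det(U) as the LTS whose states are the downward-closed subsets of S ordered by inclusion, with unique initial state ↓I, transition function det(δ)(D,a) = ↓(δ(D,a)), and final states the downward-closed sets that intersect F. Then det(U) is a deterministic ULTS and L(det(U)) = L(U). -/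
namespace ULTS

variable {A : Type}

lemma dcl_downClosed (U : ULTS A) (Q : Set U.S) : U.DownClosed (U.dcl Q) := by
  rintro s t hst ⟨q, hq, htq⟩
  exact ⟨q, hq, U.le_trans hst htq⟩

lemma dcl_mono (U : ULTS A) {P Q : Set U.S} (h : P ⊆ Q) : U.dcl P ⊆ U.dcl Q := by
  rintro s ⟨q, hq, hsq⟩
  exact ⟨q, h hq, hsq⟩

lemma stepSet_mono (U : ULTS A) {P Q : Set U.S} (h : P ⊆ Q) (a : A) :
    U.stepSet P a ⊆ U.stepSet Q a := by
  intro s hs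
  simp only [stepSet, Set.mem_iUnion] at hs ⊢
  obtain ⟨t, ht, hst⟩ := hs
  exact ⟨t, h ht, hst⟩

/-- The determinization of a ULTS: states are the downward-closed subsets of the
original states ordered by inclusion, the unique initial state is `↓I`, the
transition function is `det(δ)(D, a) = ↓(δ(D, a))`, and the final states are the
downward-closed sets intersecting `F`. -/
def det (U : ULTS A) : ULTS A where
  S := {D : Set U.S // U.DownClosed D}
  le D E := D.1 ⊆ E.1
  le_refl _ := subset_rfl
  le_trans _ _ _ h1 h2 := h1.trans h2
  init := {⟨U.dcl U.init, U.dcl_downClosed _⟩}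
  tr D a := {⟨U.dcl (U.stepSet D.1 a), U.dcl_downClosed _⟩}
  final := {D | (D.1 ∩ U.final).Nonempty}
  final_up := by
    rintro D E ⟨s, hsD, hsF⟩ hDE
    exact ⟨s, hDE hsD, hsF⟩
  sim := by
    rintro D E a D' hDE hD'
    refine ⟨⟨U.dcl (U.stepSet E.1 a), U.dcl_downClosed _⟩, Set.mem_singleton _, ?_⟩
    rcases hD' with rfl
    exact U.dcl_mono (U.stepSet_mono hDE a)

end ULTS

/-!
Since `≤` is a simulation, closing downward before or after a step makes no difference:
`↓δ(↓P, a) = ↓δ(P, a)`. Hence the unique run of `det(U)` on `w` ends in `↓δ(I, w)`, and as `F`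
is upward closed, `↓δ(I, w)` meets `F` exactly when `δ(I, w)` does.
-/

namespace ULTS

variable {A : Type} (U : ULTS A)

lemma stepSet_singleton (s : U.S) (a : A) : U.stepSet {s} a = U.tr s a :=
  Set.biUnion_singleton s (U.tr · a)

lemma subset_dcl (P : Set U.S) : P ⊆ U.dcl P :=
  fun s hs => ⟨s, hs, U.le_refl s⟩

lemma dcl_stepSet_dcl (P : Set U.S) (a : A) :
    U.dcl (U.stepSet (U.dcl P) a) = U.dcl (U.stepSet P a) := by
  refine Set.Subset.antisymm ?_ (U.dcl_mono (U.stepSet_mono (U.subset_dcl P) a))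
  rintro s ⟨s', hs', hss'⟩
  simp only [stepSet, Set.mem_iUnion] at hs'
  obtain ⟨q, ⟨p, hp, hqp⟩, hs'q⟩ := hs'
  obtain ⟨t', ht', hs't'⟩ := U.sim a hqp hs'q
  exact ⟨t', Set.mem_biUnion hp ht', U.le_trans hss' hs't'⟩

lemma dcl_inter_final_nonempty_iff (Q : Set U.S) :
    (U.dcl Q ∩ U.final).Nonempty ↔ (Q ∩ U.final).Nonempty := by
  constructor
  · rintro ⟨s, ⟨q, hq, hsq⟩, hsF⟩
    exact ⟨q, hq, U.final_up hsF hsq⟩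
  · rintro ⟨s, hs, hsF⟩
    exact ⟨s, U.subset_dcl Q hs, hsF⟩

def dclState (P : Set U.S) : U.det.S := ⟨U.dcl P, U.dcl_downClosed P⟩

lemma det_stepSet_dclState (P : Set U.S) (a : A) :
    U.det.stepSet {U.dclState P} a = {U.dclState (U.stepSet P a)} := by
  rw [stepSet_singleton]
  exact congrArg ({·})
    (Subtype.ext (by exact U.dcl_stepSet_dcl P a) : U.dclState (U.stepSet (U.dcl P) a) = _)

lemma det_reachSet_dclState (P : Set U.S) (w : List A) :
    U.det.reachSet {U.dclState P} w = {U.dclState (U.reachSet P w)} := by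
  induction w generalizing P with
  | nil => rfl
  | cons a w ih => exact (congrArg (U.det.reachSet · w) (U.det_stepSet_dclState P a)).trans (ih _)

lemma det_deterministic : U.det.Deterministic :=
  ⟨⟨_, rfl⟩, fun _ _ => ⟨_, rfl⟩⟩

lemma det_lang : U.det.lang = U.lang := by
  ext w
  change (U.det.reachSet {U.dclState U.init} w ∩ U.det.final).Nonempty ↔ _
  rw [det_reachSet_dclState, Set.singleton_inter_nonempty]
  exact U.dcl_inter_final_nonempty_iff _

end ULTS

theorem det_deterministic_lang_eq_general {A : Type} (U : ULTS A) :
    U.det.Deterministic ∧ U.det.lang = U.lang :=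
  ⟨U.det_deterministic, U.det_lang⟩

/-- The determinization `det(U)` of a ULTS `U` is a deterministic
ULTS accepting the same language as `U`. -/
theorem det_deterministic_lang_eq {A : Type} [Finite A] (U : ULTS A) :
    U.det.Deterministic ∧ U.det.lang = U.lang :=
  det_deterministic_lang_eq_general U
end

section
/- For every upward-compatible well-structured transition system U over a finite alphabet Σ, there exists a WSTS U' over Σ with a countable set of states such that L(U') = L(U). -/
/-!
Every accepted word has a finite accepting run, so the union of these runs over the countably many
words is a countable set of states. Closing it under chosen simulation witnesses, in countably many
rounds, keeps it countable and makes the order a simulation on it, so it carries a sub-WSTS. The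
restriction has no new runs, and every accepted word keeps its run, so the language is unchanged.
-/

theorem Set.Countable.exists_superset_closed {α β : Type*} [Countable β] {S : Set α}
    (hS : S.Countable) (g : α → β → α → α) :
    ∃ C, S ⊆ C ∧ C.Countable ∧ ∀ x ∈ C, ∀ b, ∀ y ∈ C, g x b y ∈ C := by
  let step : Set α → Set α := fun D => D ∪ ⋃ b, Set.image2 (fun x y => g x b y) D D
  let stage : ℕ → Set α := fun n => step^[n] S
  have stage_succ (n : ℕ) : stage (n + 1) = step (stage n) := Function.iterate_succ_apply' _ _ _
  have stage_mono : Monotone stage :=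
    monotone_nat_of_le_succ fun n => (stage_succ n).symm ▸ Set.subset_union_left
  refine ⟨⋃ n, stage n, Set.subset_iUnion stage 0, Set.countable_iUnion fun n => ?_, ?_⟩
  · induction n with
    | zero => exact hS
    | succ n ih =>
      rw [stage_succ]
      exact ih.union (Set.countable_iUnion fun b => ih.image2 ih _)
  · intro x hx b y hy
    obtain ⟨m, hxm⟩ := Set.mem_iUnion.mp hx
    obtain ⟨n, hyn⟩ := Set.mem_iUnion.mp hy
    refine Set.mem_iUnion.mpr ⟨max m n + 1, ?_⟩
    rw [stage_succ]
    exact Or.inr <| Set.mem_iUnion.mpr ⟨b, Set.mem_image2_of_mem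
      (stage_mono (le_max_left m n) hxm) (stage_mono (le_max_right m n) hyn)⟩

namespace ULTS

variable {A : Type} (U : ULTS A)

theorem reachSet_append (P : Set U.S) (w v : List A) :
    U.reachSet P (w ++ v) = U.reachSet (U.reachSet P w) v := by
  induction w generalizing P with
  | nil => rfl
  | cons a w ih => exact ih _

theorem reachSet_append_singleton (P : Set U.S) (w : List A) (a : A) :
    U.reachSet P (w ++ [a]) = U.stepSet (U.reachSet P w) a :=
  U.reachSet_append P w [a]

def IsSimulationClosed (C : Set U.S) : Prop :=
  ∀ ⦃s t s'⦄ (a : A), s ∈ C → t ∈ C → s' ∈ C → U.le s t → s' ∈ U.tr s a →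
    ∃ t' ∈ C, t' ∈ U.tr t a ∧ U.le s' t'

def restrict (C : Set U.S) (hC : U.IsSimulationClosed C) : ULTS A where
  S := C
  le s t := U.le s t
  le_refl s := U.le_refl s
  le_trans _ _ _ h₁ h₂ := U.le_trans h₁ h₂
  init := Subtype.val ⁻¹' U.init
  tr s a := Subtype.val ⁻¹' U.tr s a
  final := Subtype.val ⁻¹' U.final
  final_up _ _ hs hst := U.final_up hs hst
  sim := fun s t a s' hst hs' =>
    let ⟨t', ht'C, ht', hle⟩ := hC a s.2 t.2 s'.2 hst hs'
    ⟨⟨t', ht'C⟩, ht', hle⟩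

variable {U}

theorem isWQO_restrict (hU : U.IsWQO) {C : Set U.S} (hC : U.IsSimulationClosed C) :
    (U.restrict C hC).IsWQO :=
  fun f => hU fun n => (f n).1

theorem image_reachSet_restrict_subset {C : Set U.S} (hC : U.IsSimulationClosed C)
    (P : Set U.S) (w : List A) :
    Subtype.val '' (U.restrict C hC).reachSet (Subtype.val ⁻¹' P) w ⊆ U.reachSet P w := by
  induction w using List.reverseRecOn with
  | nil => exact Set.image_preimage_subset _ _
  | append_singleton w a ih =>
    rintro _ ⟨x, hx, rfl⟩
    rw [reachSet_append_singleton] at hx ⊢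
    obtain ⟨y, hy, hxy⟩ := Set.mem_iUnion₂.mp hx
    exact Set.mem_iUnion₂.mpr ⟨y.1, ih ⟨y, hy, rfl⟩, hxy⟩

theorem lang_restrict_subset {C : Set U.S} (hC : U.IsSimulationClosed C) :
    (U.restrict C hC).lang ⊆ U.lang := fun w ⟨x, hx, hxf⟩ =>
  ⟨x.1, U.image_reachSet_restrict_subset hC _ w ⟨x, hx, rfl⟩, hxf⟩

/-- The finite set `T` is the set of states visited by one run from `P` to `x`. -/
theorem exists_finite_run {P : Set U.S} {x : U.S} {w : List A} (hx : x ∈ U.reachSet P w) :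
    ∃ T : Set U.S, T.Finite ∧ ∀ C (hC : U.IsSimulationClosed C), T ⊆ C →
      x ∈ Subtype.val '' (U.restrict C hC).reachSet (Subtype.val ⁻¹' P) w := by
  induction w using List.reverseRecOn generalizing x with
  | nil => exact ⟨{x}, Set.finite_singleton x, fun C _ hxC => ⟨⟨x, hxC rfl⟩, hx, rfl⟩⟩
  | append_singleton w a ih =>
    rw [reachSet_append_singleton] at hx
    obtain ⟨y, hy, hxy⟩ := Set.mem_iUnion₂.mp hx
    obtain ⟨T, hTfin, hT⟩ := ih hy
    refine ⟨insert x T, hTfin.insert x, fun C hC hTC => ?_⟩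
    obtain ⟨y', hy', rfl⟩ := hT C hC ((Set.subset_insert x T).trans hTC)
    refine ⟨⟨x, hTC (Set.mem_insert x T)⟩, ?_, rfl⟩
    rw [reachSet_append_singleton]
    exact Set.mem_iUnion₂.mpr ⟨y', hy', hxy⟩

theorem exists_finite_forall_mem_lang_restrict {w : List A} (hw : w ∈ U.lang) :
    ∃ T : Set U.S, T.Finite ∧ ∀ C (hC : U.IsSimulationClosed C), T ⊆ C →
      w ∈ (U.restrict C hC).lang := by
  obtain ⟨x, hx, hxf⟩ := hw
  obtain ⟨T, hTfin, hT⟩ := exists_finite_run hx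
  refine ⟨T, hTfin, fun C hC hTC => ?_⟩
  obtain ⟨y, hy, rfl⟩ := hT C hC hTC
  exact ⟨y, hy, hxf⟩

theorem exists_countable_isSimulationClosed_superset [Countable A] {S : Set U.S}
    (hS : S.Countable) : ∃ C, S ⊆ C ∧ C.Countable ∧ U.IsSimulationClosed C := by
  have witness (t : U.S) (a : A) (s' : U.S) :
      ∃ t', (∃ t'', t'' ∈ U.tr t a ∧ U.le s' t'') → t' ∈ U.tr t a ∧ U.le s' t' := by
    by_cases h : ∃ t'', t'' ∈ U.tr t a ∧ U.le s' t''
    · obtain ⟨t', ht'⟩ := h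
      exact ⟨t', fun _ => ht'⟩
    · exact ⟨t, fun h' => (h h').elim⟩
  choose g hg using witness
  obtain ⟨C, hSC, hCc, hCg⟩ := hS.exists_superset_closed g
  exact ⟨C, hSC, hCc, fun _ t s' a _ ht hs' hst hs't =>
    ⟨g t a s', hCg t ht a s' hs', hg t a s' (U.sim a hst hs't)⟩⟩

end ULTS

/-- Every upward-compatible WSTS language is accepted by a WSTS
with a countable set of states. -/
theorem wsts_countable_states {A : Type} [Finite A] (U : ULTS A) (hU : U.IsWQO) :
    ∃ V : ULTS A, V.IsWQO ∧ Countable V.S ∧ V.lang = U.lang := by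
  choose T hTfin hT using fun w : U.lang => U.exists_finite_forall_mem_lang_restrict w.2
  obtain ⟨C, hTC, hCc, hC⟩ := U.exists_countable_isSimulationClosed_superset
    (Set.countable_iUnion fun w => (hTfin w).countable)
  refine ⟨U.restrict C hC, ULTS.isWQO_restrict hU hC, hCc.to_subtype,
    (ULTS.lang_restrict_subset hC).antisymm fun w hw => ?_⟩
  exact hT ⟨w, hw⟩ C hC ((Set.subset_iUnion T _).trans hTC)
end

section
/- Let (S, ≤) be a quasi order. Then (S, ≤) is a WQO if and only if every sequence (D_i)_{i∈ℕ} of downward-closed subsets of S has a subsequence (D_{φ(i)})_{i∈ℕ} (φ : ℕ → ℕ strictly monotone) that converges, i.e., ⋃_{i∈ℕ} ⋂_{j≥i} D_{φ(j)} = ⋃_{i∈ℕ} D_{φ(i)}. -/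
/-!
In a WQO the lower sets admit no strictly decreasing sequence (pick `xₙ ∈ Lₙ \ Lₙ₊₁`; a good
pair `xᵢ ≤ xⱼ` would put `xᵢ` into `Lᵢ₊₁`). So among the unions `⋃ᵢ D (φ i)` over subsequences
there is a minimal one, and it is unchanged by passing to any further subsequence. A point of it
lying outside infinitely many `D (φ j)` would produce a further subsequence whose union misses
it; hence the subsequence converges. Conversely, apply the hypothesis to the lower closures of
the tails of a sequence `f`: convergence puts `f (φ 0)` below some later `f m`.
-/

/-- A relation is a well quasi order if every infinite sequence has an
increasing pair `i < j` with `r (f i) (f j)`. -/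
def IsWQORel {S : Type*} (r : S → S → Prop) : Prop :=
  ∀ f : ℕ → S, ∃ i j, i < j ∧ r (f i) (f j)

open Filter

theorem Set.iUnion_iInter_ge_eq_iUnion_of_forall_subseq {α : Type*} {D : ℕ → Set α}
    (h : ∀ ψ : ℕ → ℕ, StrictMono ψ → ⋃ i, D (ψ i) = ⋃ i, D i) :
    ⋃ i, ⋂ j, ⋂ (_ : i ≤ j), D j = ⋃ i, D i := by
  refine (Set.iUnion_mono fun i => Set.biInter_subset_of_mem le_rfl).antisymm ?_
  intro x hx
  by_contra hx_liminf
  have hfreq : ∃ᶠ n in atTop, x ∉ D n := by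
    refine frequently_atTop.2 fun i => ?_
    by_contra! hx_tail
    exact hx_liminf (Set.mem_iUnion.2 ⟨i, Set.mem_iInter₂.2 hx_tail⟩)
  obtain ⟨ψ, hψ, hxψ⟩ := extraction_of_frequently_atTop hfreq
  rw [← h ψ hψ, Set.mem_iUnion] at hx
  obtain ⟨i, hxi⟩ := hx
  exact hxψ i hxi

theorem exists_strictMono_forall_iSup_subseq_eq {α : Type*} [CompleteLattice α]
    [WellFoundedLT α] (f : ℕ → α) :
    ∃ φ : ℕ → ℕ, StrictMono φ ∧
      ∀ ψ : ℕ → ℕ, StrictMono ψ → ⨆ i, f (φ (ψ i)) = ⨆ i, f (φ i) := by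
  obtain ⟨_, ⟨φ, hφ, rfl⟩, hmin⟩ := wellFounded_lt.has_min
    {a | ∃ φ : ℕ → ℕ, StrictMono φ ∧ a = ⨆ i, f (φ i)} ⟨_, id, strictMono_id, rfl⟩
  refine ⟨φ, hφ, fun ψ hψ => ?_⟩
  have hle : ⨆ i, f (φ (ψ i)) ≤ ⨆ i, f (φ i) := iSup_le fun i => le_iSup (f ∘ φ) (ψ i)
  exact hle.eq_of_not_lt (hmin _ ⟨φ ∘ ψ, hφ.comp hψ, rfl⟩)

instance LowerSet.wellFoundedLT_of_wellQuasiOrderedLE {S : Type*} [Preorder S]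
    [WellQuasiOrderedLE S] : WellFoundedLT (LowerSet S) := by
  rw [WellFoundedLT, isWellFounded_iff, RelEmbedding.wellFounded_iff_isEmpty]
  refine ⟨fun L => ?_⟩
  have hL : StrictAnti L :=
    strictAnti_nat_of_succ_lt fun n => L.map_rel_iff.2 (Nat.lt_succ_self n)
  choose x hx hx_succ using fun n =>
    Set.exists_of_ssubset (LowerSet.coe_ssubset_coe.2 (hL (Nat.lt_succ_self n)))
  obtain ⟨i, j, hij, hle⟩ := wellQuasiOrdered_le x
  exact hx_succ i ((L (i + 1)).lower hle (hL.antitone hij (hx j)))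

theorem exists_lt_le_of_lowerClosure_tail_converges {S : Type*} [Preorder S] (f : ℕ → S)
    {φ : ℕ → ℕ} (hφ : StrictMono φ)
    (hconv : (⋃ i, ⋂ j, ⋂ (_ : i ≤ j), (lowerClosure (f '' Set.Ici (φ j)) : Set S)) =
      ⋃ i, (lowerClosure (f '' Set.Ici (φ i)) : Set S)) :
    ∃ i j, i < j ∧ f i ≤ f j := by
  have hmem : f (φ 0) ∈ ⋃ i, (lowerClosure (f '' Set.Ici (φ i)) : Set S) :=
    Set.mem_iUnion.2 ⟨0, subset_lowerClosure ⟨φ 0, Set.mem_Ici.2 le_rfl, rfl⟩⟩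
  rw [← hconv, Set.mem_iUnion] at hmem
  obtain ⟨i, hi⟩ := hmem
  have hlate := Set.mem_iInter₂.1 hi (max i 1) (le_max_left i 1)
  obtain ⟨_, ⟨m, hm, rfl⟩, hle⟩ := mem_lowerClosure.1 hlate
  exact ⟨φ 0, m, (hφ (lt_max_of_lt_right one_pos)).trans_le hm, hle⟩

/-- A quasi order `(S, ≤)` is a WQO iff every sequence of
downward-closed subsets of `S` has a subsequence that converges in the lattice of
downward-closed sets, i.e. `⋃ᵢ ⋂_{j ≥ i} D (φ j) = ⋃ᵢ D (φ i)`. -/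
theorem wqo_iff_downClosed_converging_subseq {S : Type*} [Preorder S] :
    IsWQORel ((· ≤ ·) : S → S → Prop) ↔
      ∀ D : ℕ → Set S, (∀ i, ∀ ⦃s t : S⦄, s ≤ t → t ∈ D i → s ∈ D i) →
        ∃ φ : ℕ → ℕ, StrictMono φ ∧
          (⋃ i, ⋂ j, ⋂ (_ : i ≤ j), D (φ j)) = ⋃ i, D (φ i) := by
  constructor
  · intro hwqo D hD
    have : WellQuasiOrderedLE S := ⟨hwqo⟩
    let L : ℕ → LowerSet S := fun i => ⟨D i, fun _ _ hle => hD i hle⟩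
    obtain ⟨φ, hφ, hstable⟩ := exists_strictMono_forall_iSup_subseq_eq L
    refine ⟨φ, hφ, Set.iUnion_iInter_ge_eq_iUnion_of_forall_subseq fun ψ hψ => ?_⟩
    have h := congrArg SetLike.coe (hstable ψ hψ)
    rwa [LowerSet.coe_iSup, LowerSet.coe_iSup] at h
  · intro hconv f
    obtain ⟨φ, hφ, hφ_conv⟩ := hconv (fun i => lowerClosure (f '' Set.Ici i)) fun _ _ _ hle =>
      (lowerClosure _).lower hle
    exact exists_lt_le_of_lowerClosure_tail_converges f hφ hφ_conv
end

section
/- Let U be a CTS over a finite alphabet Σ with a countable set of states, and let X be an inductive invariant of U. Then the closure cl(X) is again an inductive invariant of U, and cl(X) is finitely represented, i.e., cl(X) = ↓Q for some finite set Q of states. -/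
/-!
Finitely many states of `cl(X)` already dominate `X`: otherwise, enumerating the countably many
states as `w₀, w₁, …`, pick `xₙ ∈ X` above none of the `wₖ ∈ cl(X)` with `k ≤ n`; the join of a
converging subsequence `(x_{φ k})` is some `w_K ∈ cl(X)`, yet `x_{φ K} ≤ w_K` and `K ≤ φ K`.
Given such a finite `Q ⊆ cl(X)`, a converging sequence in `X` has infinitely many terms below a
single `q ∈ Q`, so its join, which is the join of its tail infima, is below `q`; hence
`cl(X) = ↓Q`. Invariance holds because join-preserving maps and meets with a fixed element
preserve convergence, and because, by finite acceptance, a final join of the increasing tail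
infima would already be final at a finite stage, hence inside `X`.
-/

/-- A sequence in a complete lattice converges if
`⨆ i, ⨅ j ≥ i, s j = ⨆ i, s i`. -/
def Converges {S : Type*} [CompleteLattice S] (s : ℕ → S) : Prop :=
  (⨆ i, ⨅ j, ⨅ (_ : i ≤ j), s j) = ⨆ i, s i

/-- A completely distributive lattice is converging if every sequence has a
converging subsequence. -/
def ConvergingLattice (S : Type*) [CompletelyDistribLattice S] : Prop :=
  ∀ s : ℕ → S, ∃ φ : ℕ → ℕ, StrictMono φ ∧ Converges (s ∘ φ)

/-- The closure of a set: all joins of converging sequences inside the set. -/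
def limClosure {S : Type*} [CompleteLattice S] (X : Set S) : Set S :=
  {x | ∃ s : ℕ → S, (∀ i, s i ∈ X) ∧ Converges s ∧ x = ⨆ i, s i}

/-- A set is closed if it contains the joins of all its converging sequences. -/
def SeqClosed {S : Type*} [CompleteLattice S] (G : Set S) : Prop :=
  ∀ s : ℕ → S, (∀ i, s i ∈ G) → Converges s → (⨆ i, s i) ∈ G

open Set
open Filter (atTop frequently_atTop)

section CompleteLattice

variable {S T : Type*} [CompleteLattice S] [CompleteLattice T]

def tailInf (s : ℕ → S) (i : ℕ) : S := ⨅ j, ⨅ (_ : i ≤ j), s j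

def FiniteAcceptance (F : Set S) : Prop :=
  ∀ K : Set S, sSup K ∈ F → ∃ N, N ⊆ K ∧ N.Finite ∧ sSup N ∈ F

lemma tailInf_le (s : ℕ → S) {i j : ℕ} (h : i ≤ j) : tailInf s i ≤ s j := iInf₂_le j h

lemma le_tailInf {s : ℕ → S} {i : ℕ} {a : S} (h : ∀ j, i ≤ j → a ≤ s j) :
    a ≤ tailInf s i :=
  le_iInf₂ h

lemma monotone_tailInf (s : ℕ → S) : Monotone (tailInf s) :=
  fun _ _ hi => le_tailInf fun _ hj => tailInf_le s (hi.trans hj)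

lemma tailInf_inf_left (a : S) (s : ℕ → S) (i : ℕ) :
    tailInf (fun j => a ⊓ s j) i = a ⊓ tailInf s i :=
  le_antisymm
    (le_inf ((tailInf_le _ le_rfl).trans inf_le_left)
      (le_tailInf fun _ hj => (tailInf_le _ hj).trans inf_le_right))
    (le_tailInf fun _ hj => inf_le_inf_left a (tailInf_le s hj))

lemma Converges.iSup_tailInf {s : ℕ → S} (hs : Converges s) :
    ⨆ i, tailInf s i = ⨆ i, s i := hs

lemma converges_const (c : S) : Converges fun _ : ℕ => c :=
  le_antisymm (iSup_mono fun _ => tailInf_le _ le_rfl)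
    (iSup_mono fun _ => le_tailInf fun _ _ => le_rfl)

lemma Converges.map (f : sSupHom S T) {s : ℕ → S} (hs : Converges s) :
    Converges fun i => f (s i) := by
  refine le_antisymm (iSup_mono fun i => tailInf_le _ le_rfl) ?_
  calc ⨆ i, f (s i) = f (⨆ i, tailInf s i) := by rw [hs.iSup_tailInf, map_iSup]
    _ = ⨆ i, f (tailInf s i) := map_iSup f _
    _ ≤ ⨆ i, tailInf (fun j => f (s j)) i :=
        iSup_mono fun _ => le_tailInf fun _ hj => OrderHomClass.mono f (tailInf_le s hj)

lemma Converges.iSup_le_of_frequently_le {s : ℕ → S} (hs : Converges s) {q : S}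
    (h : ∃ᶠ j in atTop, s j ≤ q) : ⨆ i, s i ≤ q := by
  rw [← hs.iSup_tailInf]
  refine iSup_le fun i => ?_
  obtain ⟨j, hij, hj⟩ := frequently_atTop.1 h i
  exact (tailInf_le s hij).trans hj

lemma FiniteAcceptance.iSup_notMem_of_monotone {F X : Set S} (hF : FiniteAcceptance F)
    (hX : IsLowerSet X) (hFX : F ∩ X = ∅) {t : ℕ → S} (ht : Monotone t) (htX : ∀ i, t i ∈ X) :
    ⨆ i, t i ∉ F := by
  intro htF
  rw [← sSup_range, ← image_univ] at htF
  obtain ⟨I, -, hI, hIF⟩ := exists_subset_image_finite_and.1 (hF _ htF)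
  obtain ⟨m, hm⟩ := ht.directed_le.finite_set_le hI
  have hIX : sSup (t '' I) ∈ X := hX (sSup_le (forall_mem_image.2 hm)) (htX m)
  exact (eq_empty_iff_forall_notMem.1 hFX) _ ⟨hIF, hIX⟩

lemma subset_limClosure (X : Set S) : X ⊆ limClosure X :=
  fun x hx => ⟨fun _ => x, fun _ => hx, converges_const x, iSup_const.symm⟩

lemma mapsTo_limClosure (f : sSupHom S T) {X : Set S} {Y : Set T} (h : MapsTo f X Y) :
    MapsTo f (limClosure X) (limClosure Y) := by
  rintro _ ⟨s, hsX, hs, rfl⟩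
  exact ⟨fun i => f (s i), fun i => h (hsX i), hs.map f, map_iSup f s⟩

lemma inter_limClosure_eq_empty {F X : Set S} (hF : FiniteAcceptance F) (hX : IsLowerSet X)
    (hFX : F ∩ X = ∅) : F ∩ limClosure X = ∅ := by
  refine eq_empty_iff_forall_notMem.2 ?_
  rintro _ ⟨hF', s, hsX, hs, rfl⟩
  rw [← hs.iSup_tailInf] at hF'
  exact hF.iSup_notMem_of_monotone hX hFX (monotone_tailInf s)
    (fun i => hX (tailInf_le s le_rfl) (hsX i)) hF'

lemma limClosure_subset_lowerClosure {X Q : Set S} (hQ : Q.Finite)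
    (hXQ : X ⊆ (lowerClosure Q : Set S)) : limClosure X ⊆ (lowerClosure Q : Set S) := by
  rintro _ ⟨s, hsX, hs, rfl⟩
  have hfreq : ∃ᶠ j in atTop, ∃ q ∈ Q, s j ≤ q :=
    Filter.Frequently.of_forall fun j => hXQ (hsX j)
  obtain ⟨q, hq, hsq⟩ := hQ.frequently_exists.1 hfreq
  exact ⟨q, hq, hs.iSup_le_of_frequently_le hsq⟩

end CompleteLattice

section Frame

variable {S : Type*} [Order.Frame S]

lemma Converges.inf_left {s : ℕ → S} (hs : Converges s) (a : S) :
    Converges fun j => a ⊓ s j := by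
  calc ⨆ i, tailInf (fun j => a ⊓ s j) i = ⨆ i, a ⊓ tailInf s i := by
        simp only [tailInf_inf_left]
    _ = ⨆ i, a ⊓ s i := by rw [← inf_iSup_eq, hs.iSup_tailInf, inf_iSup_eq]

lemma IsLowerSet.limClosure {X : Set S} (hX : IsLowerSet X) : IsLowerSet (limClosure X) := by
  rintro _ a ha ⟨s, hsX, hs, rfl⟩
  exact ⟨fun i => a ⊓ s i, fun i => hX inf_le_right (hsX i), hs.inf_left a,
    by rw [← inf_iSup_eq, inf_eq_left.2 ha]⟩

end Frame

lemma ConvergingLattice.exists_finite_subset_limClosure {S : Type*}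
    [CompletelyDistribLattice S] [Countable S] (hconv : ConvergingLattice S) (X : Set S) :
    ∃ Q ⊆ limClosure X, Q.Finite ∧ X ⊆ (lowerClosure Q : Set S) := by
  by_contra! h
  obtain ⟨w, hw⟩ := exists_surjective_nat S
  have hpick (n : ℕ) : ∃ x ∈ X, x ∉ (lowerClosure (w '' Iic n ∩ limClosure X) : Set S) :=
    not_subset.1 (h _ inter_subset_right (((finite_Iic n).image w).inter_of_left _))
  choose x hxX hx using hpick
  obtain ⟨φ, hφ, hc⟩ := hconv x
  obtain ⟨K, hK⟩ := hw (⨆ k, x (φ k))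
  refine hx (φ K) ⟨w K, ⟨⟨K, hφ.le_apply, rfl⟩, ?_⟩, ?_⟩
  · exact hK ▸ ⟨x ∘ φ, fun k => hxX (φ k), hc, rfl⟩
  · exact hK ▸ le_iSup (fun k => x (φ k)) K

theorem cts_closure_invariant_finitely_represented_general
    {A : Type} {S : Type*} [CompletelyDistribLattice S] [Countable S]
    (hconv : ConvergingLattice S)
    (init : S) (tr : S → A → S) (final : Set S)
    (hjoin : ∀ (a : A) (P : Set S), tr (sSup P) a = sSup ((fun p => tr p a) '' P))
    (hfinAcc : ∀ K : Set S, sSup K ∈ final → ∃ N, N ⊆ K ∧ N.Finite ∧ sSup N ∈ final)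
    (X : Set S)
    (hXdc : ∀ ⦃s t : S⦄, s ≤ t → t ∈ X → s ∈ X)
    (hXinit : init ∈ X)
    (hXfinal : final ∩ X = ∅)
    (hXstep : ∀ (a : A), ∀ x ∈ X, tr x a ∈ X) :
    ((∀ ⦃s t : S⦄, s ≤ t → t ∈ limClosure X → s ∈ limClosure X) ∧
      init ∈ limClosure X ∧
      final ∩ limClosure X = ∅ ∧
      ∀ (a : A), ∀ x ∈ limClosure X, tr x a ∈ limClosure X) ∧
    ∃ Q : Set S, Q.Finite ∧ limClosure X = {s | ∃ q ∈ Q, s ≤ q} := by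
  have hX : IsLowerSet X := fun _ _ h => hXdc h
  have hclX : IsLowerSet (limClosure X) := hX.limClosure
  obtain ⟨Q, hQX, hQ, hXQ⟩ := hconv.exists_finite_subset_limClosure X
  refine ⟨⟨fun s t => @hclX t s, subset_limClosure X hXinit,
    inter_limClosure_eq_empty hfinAcc hX hXfinal, fun a => ?_⟩, Q, hQ, ?_⟩
  · exact mapsTo_limClosure ⟨(tr · a), hjoin a⟩ (hXstep a)
  · exact (limClosure_subset_lowerClosure hQ hXQ).antisymm (lowerClosure_min hQX hclX)

/-- Let `U` be a CTS (a deterministic ULTS over a converging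
lattice whose transition functions preserve arbitrary joins and whose upward-closed
set of final states satisfies finite acceptance) with a countable set of states,
and let `X` be an inductive invariant of `U`. Then the closure `cl(X)` is again an
inductive invariant of `U`, and it is finitely represented: `cl(X) = ↓Q` for some
finite set `Q` of states. -/
theorem cts_closure_invariant_finitely_represented
    {A : Type} [Finite A] {S : Type*} [CompletelyDistribLattice S] [Countable S]
    (hconv : ConvergingLattice S)
    (init : S) (tr : S → A → S) (final : Set S)
    (hfinal_up : ∀ ⦃s t : S⦄, s ∈ final → s ≤ t → t ∈ final)
    (hjoin : ∀ (a : A) (P : Set S), tr (sSup P) a = sSup ((fun p => tr p a) '' P))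
    (hfinAcc : ∀ K : Set S, sSup K ∈ final → ∃ N, N ⊆ K ∧ N.Finite ∧ sSup N ∈ final)
    (X : Set S)
    (hXdc : ∀ ⦃s t : S⦄, s ≤ t → t ∈ X → s ∈ X)
    (hXinit : init ∈ X)
    (hXfinal : final ∩ X = ∅)
    (hXstep : ∀ (a : A), ∀ x ∈ X, tr x a ∈ X) :
    ((∀ ⦃s t : S⦄, s ≤ t → t ∈ limClosure X → s ∈ limClosure X) ∧
      init ∈ limClosure X ∧
      final ∩ limClosure X = ∅ ∧
      ∀ (a : A), ∀ x ∈ limClosure X, tr x a ∈ limClosure X) ∧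
    ∃ Q : Set S, Q.Finite ∧ limClosure X = {s | ∃ q ∈ Q, s ≤ q} :=
  cts_closure_invariant_finitely_represented_general hconv init tr final hjoin hfinAcc X hXdc hXinit
    hXfinal hXstep
end

section
/- Let (S, ≤) be a countable converging lattice and let G ⊆ S be nonempty and closed. Then G has a maximal element, i.e., there exists g ∈ G such that no g' ∈ G satisfies g ≤ g' and g ≠ g'. -/
section GreedyChain

variable {α : Type*} [Preorder α]

open scoped Classical in
noncomputable def greedyChain (G : Set α) (e : ℕ → α) (g₀ : α) : ℕ → α
  | 0 => g₀
  | n + 1 => if greedyChain G e g₀ n ≤ e n ∧ e n ∈ G then e n else greedyChain G e g₀ n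

variable {G : Set α} {e : ℕ → α} {g₀ : α}

theorem greedyChain_mem (h₀ : g₀ ∈ G) (n : ℕ) : greedyChain G e g₀ n ∈ G := by
  induction n with
  | zero => exact h₀
  | succ n ih =>
    rw [greedyChain]
    split_ifs with h
    exacts [h.2, ih]

theorem greedyChain_monotone : Monotone (greedyChain G e g₀) := by
  refine monotone_nat_of_le_succ fun n => ?_
  rw [greedyChain]
  split_ifs with h
  exacts [h.1, le_rfl]

theorem greedyChain_succ_of_le {n : ℕ} (hle : greedyChain G e g₀ n ≤ e n) (hmem : e n ∈ G) :
    greedyChain G e g₀ (n + 1) = e n := by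
  rw [greedyChain, if_pos ⟨hle, hmem⟩]

end GreedyChain

theorem Monotone.converges {S : Type*} [CompleteLattice S] {s : ℕ → S} (hs : Monotone s) :
    Converges s := by
  have h_tail : ∀ i, ⨅ j, ⨅ (_ : i ≤ j), s j = s i := fun i =>
    le_antisymm (iInf₂_le i le_rfl) (le_iInf₂ fun _ hij => hs hij)
  simp only [Converges, h_tail]

theorem closed_set_has_maximal_element_general
    {S : Type*} [CompletelyDistribLattice S] [Countable S]
    (G : Set S) (hne : G.Nonempty) (hG : SeqClosed G) :
    ∃ g ∈ G, ∀ g' ∈ G, ¬(g ≤ g' ∧ g ≠ g') := by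
  obtain ⟨g₀, hg₀⟩ := hne
  have : Nonempty S := ⟨g₀⟩
  obtain ⟨e, he⟩ := exists_surjective_nat S
  set s := greedyChain G e g₀
  refine ⟨⨆ n, s n, hG s (greedyChain_mem hg₀) greedyChain_monotone.converges, ?_⟩
  rintro g' hg' ⟨hle, hne'⟩
  obtain ⟨n, rfl⟩ := he g'
  have hstep : s (n + 1) = e n := greedyChain_succ_of_le ((le_iSup s n).trans hle) hg'
  exact hne' (hle.antisymm (hstep ▸ le_iSup s (n + 1)))

/-- In a countable converging lattice, every nonempty closed set
has a maximal element. -/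
theorem closed_set_has_maximal_element
    {S : Type*} [CompletelyDistribLattice S] [Countable S]
    (hconv : ConvergingLattice S)
    (G : Set S) (hne : G.Nonempty) (hG : SeqClosed G) :
    ∃ g ∈ G, ∀ g' ∈ G, ¬(g ≤ g' ∧ g ≠ g') :=
  closed_set_has_maximal_element_general G hne hG
end

section
/- Let (S, ≤) be a converging lattice, let G ⊆ S be closed, and let H ⊆ S be arbitrary. Then G \ ↓H is closed. -/
theorem SeqClosed.sdiff_of_isLowerSet {S : Type*} [CompleteLattice S] {G L : Set S}
    (hG : SeqClosed G) (hL : IsLowerSet L) : SeqClosed (G \ L) :=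
  fun s hs hc => ⟨hG s (fun i => (hs i).1) hc, fun hsup => (hs 0).2 (hL (le_iSup s 0) hsup)⟩

theorem closed_sdiff_downClosure_general
    {S : Type*} [CompletelyDistribLattice S]
    (G : Set S) (hG : SeqClosed G) (H : Set S) :
    SeqClosed (G \ {s | ∃ h ∈ H, s ≤ h}) :=
  hG.sdiff_of_isLowerSet (lowerClosure H).lower

/-- In a converging lattice, subtracting the downward closure of
an arbitrary set from a closed set yields a closed set. -/
theorem closed_sdiff_downClosure
    {S : Type*} [CompletelyDistribLattice S] (hconv : ConvergingLattice S)
    (G : Set S) (hG : SeqClosed G) (H : Set S) :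
    SeqClosed (G \ {s | ∃ h ∈ H, s ≤ h}) :=
  closed_sdiff_downClosure_general G hG H
end

section
/- The Rado order ⪯ on the Rado set R = {(c,r) ∈ ℕ×ℕ : c < r}, defined by (c₁,r₁) ⪯ (c₂,r₂) iff r₁ ≤ c₂ or (c₁ = c₂ and r₁ ≤ r₂), is a quasi order (reflexive and transitive) and a WQO: every sequence f : ℕ → R has indices i < j with f(i) ⪯ f(j). -/
/-- The Rado set: pairs `(c, r)` of naturals with `c < r`. -/
def RadoSet : Type := {x : ℕ × ℕ // x.1 < x.2}

/-- The Rado order: `(c₁, r₁) ⪯ (c₂, r₂)` iff `r₁ ≤ c₂`, or `c₁ = c₂` and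
`r₁ ≤ r₂`. -/
def radoLe (p q : RadoSet) : Prop :=
  p.1.2 ≤ q.1.1 ∨ (p.1.1 = q.1.1 ∧ p.1.2 ≤ q.1.2)

/-! If some later term has first coordinate at least `r₀`, the second coordinate of the first term,
then the first term lies below it. Otherwise all later first coordinates lie in the finite set
`{0, …, r₀ - 1}`, and a pair with equal first and comparable second coordinates exists because
equality on a finite set and `≤` on `ℕ` are well quasi orders, hence so is their product. -/

theorem radoLe_refl (p : RadoSet) : radoLe p p :=
  Or.inr ⟨rfl, le_rfl⟩

theorem radoLe_trans {p q r : RadoSet} : radoLe p q → radoLe q r → radoLe p r := by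
  rintro (hpq | ⟨hpq, hpq'⟩) (hqr | ⟨hqr, hqr'⟩)
  · exact Or.inl (hpq.trans (q.2.trans_le hqr).le)
  · exact Or.inl (hqr ▸ hpq)
  · exact Or.inl (hpq'.trans hqr)
  · exact Or.inr ⟨hpq.trans hqr, hpq'.trans hqr'⟩

theorem exists_radoLe_of_forall_fst_lt (f : ℕ → RadoSet) (N : ℕ) (hf : ∀ n, (f n).1.1 < N) :
    ∃ i j, i < j ∧ radoLe (f i) (f j) := by
  have hwqo : WellQuasiOrdered fun a b : Fin N × ℕ ↦ a.1 = b.1 ∧ a.2 ≤ b.2 :=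
    (Finite.wellQuasiOrdered _).prod wellQuasiOrdered_le
  obtain ⟨i, j, hij, hfst, hsnd⟩ := hwqo fun n ↦ (⟨(f n).1.1, hf n⟩, (f n).1.2)
  exact ⟨i, j, hij, Or.inr ⟨Fin.val_eq_of_eq hfst, hsnd⟩⟩

theorem radoLe_wellQuasiOrdered : WellQuasiOrdered radoLe := by
  intro f
  by_cases hbig : ∃ j, 0 < j ∧ (f 0).1.2 ≤ (f j).1.1
  · obtain ⟨j, hj, hle⟩ := hbig
    exact ⟨0, j, hj, Or.inl hle⟩
  · push Not at hbig
    obtain ⟨i, j, hij, hle⟩ := exists_radoLe_of_forall_fst_lt (fun n ↦ f (n + 1)) (f 0).1.2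
      fun n ↦ hbig (n + 1) n.succ_pos
    exact ⟨i + 1, j + 1, Nat.succ_lt_succ hij, hle⟩

/-- The Rado order on the Rado set is reflexive, transitive,
and a WQO. -/
theorem rado_quasi_order_wqo :
    (∀ p : RadoSet, radoLe p p) ∧
    (∀ p q r : RadoSet, radoLe p q → radoLe q r → radoLe p r) ∧
    (∀ f : ℕ → RadoSet, ∃ i j, i < j ∧ radoLe (f i) (f j)) :=
  ⟨radoLe_refl, fun _ _ _ ↦ radoLe_trans, radoLe_wellQuasiOrdered⟩
end

section
/- In the Rado order, let Cᵢ = {(i,r) ∈ R : i < r} denote column i and ↓Cᵢ its downward closure with respect to ⪯. Then the family {↓Cᵢ : i ∈ ℕ} is an infinite antichain in the set of downward-closed subsets of R ordered by inclusion: for all i ≠ j, ↓Cᵢ ⊄ ↓C_j and ↓C_j ⊄ ↓Cᵢ (and ↓Cᵢ ≠ ↓C_j). -/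
/-- Column `i` of the Rado set. -/
def radoCol (i : ℕ) : Set RadoSet := {p | p.1.1 = i}

/-- Downward closure in the Rado order. -/
def radoDcl (P : Set RadoSet) : Set RadoSet := {x | ∃ p ∈ P, radoLe x p}

/-! The closure `↓Cⱼ` is column `j` together with everything whose row index is at most `j`.
A point `(i, r)` of column `i ≠ j` with `r > j` therefore lies in `↓Cᵢ` but not in `↓Cⱼ`. -/

theorem mem_radoDcl_radoCol_iff {j : ℕ} {x : RadoSet} :
    x ∈ radoDcl (radoCol j) ↔ x.1.1 = j ∨ x.1.2 ≤ j := by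
  constructor
  · rintro ⟨p, rfl, hle | ⟨hcol, -⟩⟩
    · exact Or.inr hle
    · exact Or.inl hcol
  · rintro (hcol | hle)
    · exact ⟨x, hcol, Or.inr ⟨rfl, le_rfl⟩⟩
    · exact ⟨⟨(j, j + 1), j.lt_succ_self⟩, rfl, Or.inl hle⟩

theorem radoDcl_radoCol_not_subset {i j : ℕ} (hij : i ≠ j) :
    ¬radoDcl (radoCol i) ⊆ radoDcl (radoCol j) := by
  intro hsub
  let x : RadoSet := ⟨(i, i + j + 1), by omega⟩
  have hx : x ∈ radoDcl (radoCol j) := hsub (mem_radoDcl_radoCol_iff.mpr (Or.inl rfl))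
  rcases mem_radoDcl_radoCol_iff.mp hx with hcol | hle
  · exact hij hcol
  · have hle' : i + j + 1 ≤ j := hle
    omega

/-- The downward closures of the columns of the Rado set form an
infinite antichain in the downward-closed subsets of the Rado set ordered by
inclusion: distinct columns have incomparable, distinct downward closures. -/
theorem rado_columns_antichain :
    ∀ i j : ℕ, i ≠ j →
      ¬(radoDcl (radoCol i) ⊆ radoDcl (radoCol j)) ∧
      ¬(radoDcl (radoCol j) ⊆ radoDcl (radoCol i)) ∧
      radoDcl (radoCol i) ≠ radoDcl (radoCol j) := by
  intro i j hij
  exact ⟨radoDcl_radoCol_not_subset hij, radoDcl_radoCol_not_subset hij.symm,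
    fun h => radoDcl_radoCol_not_subset hij h.subset⟩
end

section
/- There exist a finite alphabet Σ with three letters and a language L ⊆ Σ* such that L is the language of some upward-compatible well-structured transition system, but L is not the language of any deterministic upward-compatible well-structured transition system. Consequently, the class of deterministic WSTS languages is strictly contained in the class of WSTS languages. -/
/-!
Over `Fin 3`, read `0` as `a` and `1` as `b` (the third letter is never read). The witness WSTS
has states `(e, t) : ℕ × ℕ`, where `e` is a counter and `t` a reserve guessed in the initial
state `(0, t)`: `a` increments `e`, `b` decrements it, and a `b` read at `e = 0` moves the reserve
into the counter. With final states `e > 0`, the word `aⁿbᵏ` is accepted iff `n ≠ k`: a surplus of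
`b`s is absorbed by a large enough reserve, while `aⁿbⁿ` always ends at `(0, t)`. The order
`(e = e' ∧ t ≤ t') ∨ e + t < e'` is a simulation, and a WQO because a sequence of states either
has bounded counters (and then Dickson's lemma applies) or eventually outgrows `e₀ + t₀`.

A deterministic WSTS, on the other hand, reaches a single state after `aⁱ`; the WQO yields
`i < j` with the state after `aⁱ` below the state after `aʲ`, and as the set of words accepted
from a state grows with the state, `aⁱbʲ ∈ L` forces `aʲbʲ ∈ L`.
-/

namespace ULTS

variable {A : Type} (U : ULTS A)

def Accepts : List A → U.S → Prop
  | [], s => s ∈ U.final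
  | x :: w, s => ∃ s' ∈ U.tr s x, Accepts w s'

variable {U}

theorem reachSet_inter_final_nonempty_iff (w : List A) (P : Set U.S) :
    (U.reachSet P w ∩ U.final).Nonempty ↔ ∃ s ∈ P, U.Accepts w s := by
  induction w generalizing P with
  | nil => rfl
  | cons x w ih =>
    simp only [reachSet, ih, stepSet, Set.mem_iUnion, Accepts]
    constructor
    · rintro ⟨s', ⟨s, hs, hs'⟩, h⟩
      exact ⟨s, hs, s', hs', h⟩
    · rintro ⟨s, hs, s', hs', h⟩
      exact ⟨s', ⟨s, hs, hs'⟩, h⟩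

theorem mem_lang_iff {w : List A} : w ∈ U.lang ↔ ∃ s ∈ U.init, U.Accepts w s :=
  reachSet_inter_final_nonempty_iff w U.init

theorem Accepts.mono {w : List A} {s t : U.S} (hst : U.le s t) (h : U.Accepts w s) :
    U.Accepts w t := by
  induction w generalizing s t with
  | nil => exact U.final_up h hst
  | cons x w ih =>
    obtain ⟨s', hs', hacc⟩ := h
    obtain ⟨t', ht', hst'⟩ := U.sim x hst hs'
    exact ⟨t', ht', ih hst' hacc⟩

theorem accepts_cons_iff_of_tr_eq {x : A} {w : List A} {s t : U.S} (h : U.tr s x = {t}) :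
    U.Accepts (x :: w) s ↔ U.Accepts w t := by
  simp [Accepts, h]

theorem Deterministic.exists_run (h : U.Deterministic) :
    ∃ run : List A → U.S, ∀ u w, u ++ w ∈ U.lang ↔ U.Accepts w (run u) := by
  obtain ⟨⟨s₀, hinit⟩, htr⟩ := h
  choose step hstep using htr
  have accepts_append (w : List A) :
      ∀ u s, U.Accepts (u ++ w) s ↔ U.Accepts w (u.foldl step s) := by
    intro u
    induction u with
    | nil => simp
    | cons x u ih =>
      intro s
      rw [List.cons_append, accepts_cons_iff_of_tr_eq (hstep s x), ih, List.foldl_cons]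
  exact ⟨fun u => u.foldl step s₀, fun u w => by simp [mem_lang_iff, hinit, accepts_append]⟩

theorem IsWQO.exists_lt_forall_append_mem_lang (hwqo : U.IsWQO) (hdet : U.Deterministic)
    (u : ℕ → List A) :
    ∃ i j, i < j ∧ ∀ w, u i ++ w ∈ U.lang → u j ++ w ∈ U.lang := by
  obtain ⟨run, hrun⟩ := hdet.exists_run
  obtain ⟨i, j, hij, hle⟩ := hwqo (run ∘ u)
  exact ⟨i, j, hij, fun w hw => (hrun _ _).2 (((hrun _ _).1 hw).mono hle)⟩

end ULTS

def reserveLE (p q : ℕ × ℕ) : Prop :=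
  (p.1 = q.1 ∧ p.2 ≤ q.2) ∨ p.1 + p.2 < q.1

theorem reserveLE_trans {p q r : ℕ × ℕ} (hpq : reserveLE p q) (hqr : reserveLE q r) :
    reserveLE p r := by
  unfold reserveLE at *
  omega

theorem wellQuasiOrdered_reserveLE : WellQuasiOrdered reserveLE := by
  intro f
  by_cases hbdd : ∃ B, ∀ n, (f n).1 < B
  · obtain ⟨B, hB⟩ := hbdd
    obtain ⟨i, j, hij, hfst, hsnd⟩ :=
      ((Finite.wellQuasiOrdered (· = ·)).prod wellQuasiOrdered_le)
        fun n => ((⟨(f n).1, hB n⟩ : Fin B), (f n).2)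
    exact ⟨i, j, hij, Or.inl ⟨Fin.val_eq_of_eq hfst, hsnd⟩⟩
  · push Not at hbdd
    obtain ⟨j, hj⟩ := hbdd ((f 0).1 + (f 0).2 + 1)
    exact ⟨0, j, Nat.pos_of_ne_zero (by rintro rfl; omega), Or.inr (by omega)⟩

def reserveTr : ℕ × ℕ → Fin 3 → Set (ℕ × ℕ)
  | (e, t), 0 => {(e + 1, t)}
  | (e + 1, t), 1 => {(e, t)}
  | (0, t + 1), 1 => {(t + 1, 0)}
  | _, _ => ∅

theorem reserveLE_simulation {p q : ℕ × ℕ} (x : Fin 3) {p' : ℕ × ℕ} (hpq : reserveLE p q)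
    (hp' : p' ∈ reserveTr p x) : ∃ q', q' ∈ reserveTr q x ∧ reserveLE p' q' := by
  obtain ⟨e, t⟩ := p
  obtain ⟨f, u⟩ := q
  unfold reserveLE at hpq
  fin_cases x
  · exact ⟨(f + 1, u), rfl, by obtain rfl := hp'; unfold reserveLE; omega⟩
  · rcases e with _ | e <;> rcases t with _ | t <;> rcases f with _ | f <;> rcases u with _ | u <;>
      simp_all [reserveTr, reserveLE] <;> omega
  · exact absurd hp' (Set.notMem_empty _)

def reserveWSTS : ULTS (Fin 3) where
  S := ℕ × ℕ
  le := reserveLE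
  le_refl _ := Or.inl ⟨rfl, le_rfl⟩
  le_trans _ _ _ := reserveLE_trans
  init := {p | p.1 = 0}
  tr := reserveTr
  final := {p | 0 < p.1}
  final_up _ _ hp hpq := by unfold reserveLE at hpq; simp only [Set.mem_ofPred_eq] at *; omega
  sim _ _ := reserveLE_simulation

theorem reserveWSTS_isWQO : reserveWSTS.IsWQO := wellQuasiOrdered_reserveLE

theorem reserveWSTS_accepts_cons_iff (x : Fin 3) (w : List (Fin 3)) (p : ℕ × ℕ) :
    reserveWSTS.Accepts (x :: w) p ↔ ∃ q ∈ reserveTr p x, reserveWSTS.Accepts w q :=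
  Iff.rfl

theorem reserveWSTS_accepts_replicate_one_iff (k e t : ℕ) :
    reserveWSTS.Accepts (List.replicate k 1) (e, t) ↔ k ≠ e ∧ k ≤ e + t := by
  induction k generalizing e t with
  | zero => simp only [List.replicate_zero]; exact Nat.pos_iff_ne_zero.trans (by omega)
  | succ k ih =>
    rcases e with _ | e <;> rcases t with _ | t <;>
      simp [List.replicate_succ, reserveWSTS_accepts_cons_iff, reserveTr, ih] <;> omega

theorem reserveWSTS_accepts_replicate_zero_append_iff (n e t : ℕ) (w : List (Fin 3)) :
    reserveWSTS.Accepts (List.replicate n 0 ++ w) (e, t) ↔ reserveWSTS.Accepts w (e + n, t) := by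
  induction n generalizing e with
  | zero => rfl
  | succ n ih =>
    simp [List.replicate_succ, reserveWSTS_accepts_cons_iff, reserveTr, ih, ← add_assoc,
      add_right_comm e 1 n]

theorem reserveWSTS_mem_lang_iff (n k : ℕ) :
    List.replicate n 0 ++ List.replicate k 1 ∈ reserveWSTS.lang ↔ n ≠ k := by
  have accepts_iff (t : ℕ) :
      reserveWSTS.Accepts (List.replicate n 0 ++ List.replicate k 1) (0, t) ↔
        k ≠ n ∧ k ≤ n + t := by
    rw [reserveWSTS_accepts_replicate_zero_append_iff, reserveWSTS_accepts_replicate_one_iff,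
      zero_add]
  rw [ULTS.mem_lang_iff]
  constructor
  · rintro ⟨⟨e, t⟩, rfl : e = 0, hacc⟩
    exact ((accepts_iff t).1 hacc).1.symm
  · intro hnk
    exact ⟨(0, k), rfl, (accepts_iff k).2 ⟨hnk.symm, by omega⟩⟩

/-- There are a finite alphabet with three letters and a language
over it that is accepted by some upward-compatible WSTS but by no deterministic
upward-compatible WSTS; hence the deterministic WSTS languages form a strict
subclass of the WSTS languages. -/
theorem wsts_not_determinizable :
    ∃ (A : Type) (_ : Fintype A), Nat.card A = 3 ∧
      ∃ L : Set (List A),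
        (∃ U : ULTS A, U.IsWQO ∧ U.lang = L) ∧
        ¬∃ V : ULTS A, V.IsWQO ∧ V.Deterministic ∧ V.lang = L := by
  refine ⟨Fin 3, inferInstance, by simp, reserveWSTS.lang,
    ⟨reserveWSTS, reserveWSTS_isWQO, rfl⟩, ?_⟩
  rintro ⟨V, hwqo, hdet, hlang⟩
  obtain ⟨i, j, hij, hquot⟩ := hwqo.exists_lt_forall_append_mem_lang hdet (List.replicate · 0)
  have hi : List.replicate i 0 ++ List.replicate j 1 ∈ V.lang :=
    hlang ▸ (reserveWSTS_mem_lang_iff i j).2 hij.ne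
  exact (reserveWSTS_mem_lang_iff j j).1 (hlang ▸ hquot _ hi) rfl
end
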